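/- For all natural numbers n, the alternating binomial sum over k in ℤ of (-1)^k * C(n, floor((n+5k+2)/2)) equals the n-th Fibonacci number F_n. -/
import Mathlib

/-- Binomial coefficient `C(n, m)` with an integer lower index, defined to be `0` when `m < 0`
(and automatically `0` when `m > n`). -/
def intChoose (n : ℕ) (m : ℤ) : ℤ := if 0 ≤ m then (n.choose m.toNat : ℤ) else 0

lemma intChoose_neg {n : ℕ} {m : ℤ} (h : m < 0) : intChoose n m = 0 := by
  simp [intChoose, not_le.mpr h]

lemma intChoose_big {n : ℕ} {m : ℤ} (h : (n : ℤ) < m) : intChoose n m = 0 := by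
  unfold intChoose
  rw [if_pos (by omega), Nat.choose_eq_zero_of_lt (by omega)]
  simp

lemma intChoose_pascal (n : ℕ) (m : ℤ) :
    intChoose (n + 1) m = intChoose n m + intChoose n (m - 1) := by
  rcases lt_trichotomy m 0 with h | h | h
  · rw [intChoose_neg h, intChoose_neg h, intChoose_neg (by omega)]; ring
  · subst h; simp [intChoose]
  · unfold intChoose
    rw [if_pos (by omega), if_pos (by omega), if_pos (by omega)]
    have h1 : m.toNat = (m - 1).toNat + 1 := by omega
    rw [h1, Nat.choose_succ_succ]
    push_cast; ring

lemma pas (n : ℕ) (a b : ℤ) (hab : b = a - 1) :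
    intChoose (n + 1) a = intChoose n a + intChoose n b := by
  subst hab; exact intChoose_pascal n a

lemma sign_sub_one (k : ℤ) : (-1 : ℤ) ^ (k - 1).natAbs = -(-1 : ℤ) ^ k.natAbs := by
  rcases Int.even_or_odd k with h | h
  · rw [(Int.natAbs_odd.mpr (h.sub_odd odd_one)).neg_one_pow,
        (Int.natAbs_even.mpr h).neg_one_pow]
  · rw [(Int.natAbs_even.mpr (h.sub_odd odd_one)).neg_one_pow,
        (Int.natAbs_odd.mpr h).neg_one_pow]
    ring

/-- The summand. -/
def T (n : ℕ) (k : ℤ) : ℤ := (-1) ^ k.natAbs * intChoose n (Int.fdiv ((n : ℤ) + 5 * k + 2) 2)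

/-- The correction term used for telescoping. -/
def G (n : ℕ) (k : ℤ) : ℤ :=
  if ((n : ℤ) + k) % 2 = 0 then
    (-1) ^ k.natAbs * intChoose n (Int.fdiv ((n : ℤ) + 5 * k + 4) 2)
  else 0

lemma T_eq_zero {n : ℕ} {k : ℤ}
    (h : (n : ℤ) + 5 * k + 2 < 0 ∨ 2 * (n : ℤ) + 1 < (n : ℤ) + 5 * k + 2) : T n k = 0 := by
  have h2 := Int.fdiv_eq_ediv_of_nonneg ((n : ℤ) + 5 * k + 2) (show (0:ℤ) ≤ 2 by norm_num)
  unfold T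
  rcases h with h | h
  · rw [h2, intChoose_neg (by omega), mul_zero]
  · rw [h2, intChoose_big (by omega), mul_zero]

lemma G_eq_zero {n : ℕ} {k : ℤ}
    (h : (n : ℤ) + 5 * k + 4 < 0 ∨ 2 * (n : ℤ) + 1 < (n : ℤ) + 5 * k + 4) : G n k = 0 := by
  have h2 := Int.fdiv_eq_ediv_of_nonneg ((n : ℤ) + 5 * k + 4) (show (0:ℤ) ≤ 2 by norm_num)
  unfold G
  split
  · rcases h with h | h
    · rw [h2, intChoose_neg (by omega), mul_zero]
    · rw [h2, intChoose_big (by omega), mul_zero]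
  · rfl

lemma key (n : ℕ) (k : ℤ) :
    T (n + 2) k = T (n + 1) k + T n k + (G n k - G n (k - 1)) := by
  obtain ⟨t, ht | ht⟩ := Int.even_or_odd' ((n : ℤ) + 5 * k)
  · -- n + 5k even
    have h1 : Int.fdiv ((↑(n + 2) : ℤ) + 5 * k + 2) 2 = t + 2 := by
      rw [Int.fdiv_eq_ediv_of_nonneg _ (by norm_num)]; omega
    have h2 : Int.fdiv ((↑(n + 1) : ℤ) + 5 * k + 2) 2 = t + 1 := by
      rw [Int.fdiv_eq_ediv_of_nonneg _ (by norm_num)]; omega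
    have h3 : Int.fdiv ((↑n : ℤ) + 5 * k + 2) 2 = t + 1 := by
      rw [Int.fdiv_eq_ediv_of_nonneg _ (by norm_num)]; omega
    have h4 : Int.fdiv ((↑n : ℤ) + 5 * k + 4) 2 = t + 2 := by
      rw [Int.fdiv_eq_ediv_of_nonneg _ (by norm_num)]; omega
    unfold T G
    rw [h1, h2, h3, h4, if_pos (by omega), if_neg (by omega)]
    have p1 := pas (n + 1) (t + 2) (t + 1) (by ring)
    have p2 := pas n (t + 2) (t + 1) (by ring)
    linear_combination ((-1 : ℤ) ^ k.natAbs) * p1 + ((-1 : ℤ) ^ k.natAbs) * p2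
  · -- n + 5k odd
    have h1 : Int.fdiv ((↑(n + 2) : ℤ) + 5 * k + 2) 2 = t + 2 := by
      rw [Int.fdiv_eq_ediv_of_nonneg _ (by norm_num)]; omega
    have h2 : Int.fdiv ((↑(n + 1) : ℤ) + 5 * k + 2) 2 = t + 2 := by
      rw [Int.fdiv_eq_ediv_of_nonneg _ (by norm_num)]; omega
    have h3 : Int.fdiv ((↑n : ℤ) + 5 * k + 2) 2 = t + 1 := by
      rw [Int.fdiv_eq_ediv_of_nonneg _ (by norm_num)]; omega
    have h4 : Int.fdiv ((↑n : ℤ) + 5 * (k - 1) + 4) 2 = t := by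
      rw [Int.fdiv_eq_ediv_of_nonneg _ (by norm_num)]; omega
    unfold T G
    rw [h1, h2, h3, h4, if_neg (by omega), if_pos (by omega), sign_sub_one]
    have p1 := pas (n + 1) (t + 2) (t + 1) (by ring)
    have p2 := pas n (t + 1) t (by ring)
    linear_combination ((-1 : ℤ) ^ k.natAbs) * p1 + ((-1 : ℤ) ^ k.natAbs) * p2

lemma Tsum (n : ℕ) (a b : ℤ) (ha : 5 * a ≤ -(n : ℤ) - 2) (hb : (n : ℤ) - 1 ≤ 5 * b) :
    ∑ᶠ k : ℤ, T n k = ∑ k ∈ Finset.Icc a b, T n k := by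
  apply finsum_eq_sum_of_support_subset
  intro k hk
  simp only [Function.mem_support] at hk
  simp only [Finset.coe_Icc, Set.mem_Icc]
  by_contra hc
  exact hk (T_eq_zero (by omega))

lemma Gsum (n : ℕ) (a b : ℤ) (ha : 5 * a ≤ -(n : ℤ) - 4) (hb : (n : ℤ) - 3 ≤ 5 * b) :
    ∑ᶠ k : ℤ, G n k = ∑ k ∈ Finset.Icc a b, G n k := by
  apply finsum_eq_sum_of_support_subset
  intro k hk
  simp only [Function.mem_support] at hk
  simp only [Finset.coe_Icc, Set.mem_Icc]
  by_contra hc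
  exact hk (G_eq_zero (by omega))

lemma shift (f : ℤ → ℤ) (a b : ℤ) :
    ∑ k ∈ Finset.Icc a b, f (k - 1) = ∑ j ∈ Finset.Icc (a - 1) (b - 1), f j := by
  rw [show a - 1 = a + (-1) by ring, show b - 1 = b + (-1) by ring,
    ← Finset.map_add_right_Icc, Finset.sum_map]
  simp [addRightEmbedding, sub_eq_add_neg]

lemma main_sum : ∀ n : ℕ, ∑ᶠ k : ℤ, T n k = (Nat.fib n : ℤ) := by
  intro n
  induction n using Nat.twoStepInduction with
  | zero =>
    rw [finsum_eq_zero_of_forall_eq_zero fun k => T_eq_zero (by omega)]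
    simp
  | one =>
    rw [finsum_eq_single (T 1) 0 fun x hx => T_eq_zero (by omega)]
    simp [T, intChoose]
  | more n ih1 ih2 =>
    rw [Tsum (n + 2) (-(n : ℤ) - 1) ((n : ℤ) + 1) (by omega) (by omega)]
    rw [Finset.sum_congr rfl fun k _ => key n k]
    rw [Finset.sum_add_distrib, Finset.sum_add_distrib, Finset.sum_sub_distrib]
    rw [← Tsum (n + 1) (-(n : ℤ) - 1) ((n : ℤ) + 1) (by omega) (by omega)]
    rw [← Tsum n (-(n : ℤ) - 1) ((n : ℤ) + 1) (by omega) (by omega)]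
    rw [← Gsum n (-(n : ℤ) - 1) ((n : ℤ) + 1) (by omega) (by omega)]
    rw [shift (G n) (-(n : ℤ) - 1) ((n : ℤ) + 1)]
    rw [← Gsum n (-(n : ℤ) - 1 - 1) ((n : ℤ) + 1 - 1) (by omega) (by omega)]
    rw [ih1, ih2]
    push_cast [Nat.fib_add_two]
    ring

theorem schur_sum_eq_fib (n : ℕ) :
    ∑ᶠ k : ℤ, (-1 : ℤ) ^ k.natAbs * intChoose n (Int.fdiv ((n : ℤ) + 5 * k + 2) 2) =
      (Nat.fib n : ℤ) := by
  exact main_sum n
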